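/- For a smooth, suitably decaying solution φ of □φ = f on ℝ^{1+3}, with u = t - r: ∂_t(u² Q_{00}) - ∂^i(u² Q_{0i}) = u(|(∂_t + ∂_r)φ|² + |∇̸φ|²) - u² ∂_t φ · □φ, where Q_{00} = (1/2)(|∂_tφ|² + |∇φ|²) and Q_{0i} = ∂_tφ ∂_iφ. -/

import Mathlib

open scoped BigOperators

noncomputable section

local notation "E3" => EuclideanSpace ℝ (Fin 3)

def pd (v : ℝ × E3) (ψ : ℝ × E3 → ℝ) : ℝ × E3 → ℝ := fun p => fderiv ℝ ψ p v

/-- Time derivative `∂_t`. -/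
def pt : (ℝ × E3 → ℝ) → ℝ × E3 → ℝ := pd (1, 0)

/-- Spatial derivative `∂_i`. -/
def px (i : Fin 3) : (ℝ × E3 → ℝ) → ℝ × E3 → ℝ := pd (0, EuclideanSpace.single i 1)

/-- Radial derivative `∂_r = (x/|x|)·∇`. -/
def pr (ψ : ℝ × E3 → ℝ) : ℝ × E3 → ℝ := fun p => ∑ i, (p.2 i / ‖p.2‖) * px i ψ p

/-- The wave operator `□ = -∂_t² + Δ`. -/
def box (ψ : ℝ × E3 → ℝ) : ℝ × E3 → ℝ :=
  fun p => -pt (pt ψ) p + ∑ i, px i (px i ψ) p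

/-- Squared angular gradient `|∇̸ψ|²`, so that `|∇ψ|² = |∂_rψ|² + |∇̸ψ|²`. -/
def angGradSq (ψ : ℝ × E3 → ℝ) (p : ℝ × E3) : ℝ :=
  ∑ i, (px i ψ p - (p.2 i / ‖p.2‖) * pr ψ p) ^ 2

/-- The null weight `u = t - r`. -/
def uw (p : ℝ × E3) : ℝ := p.1 - ‖p.2‖

/-- Energy density `Q₀₀ = (1/2)(|∂_tψ|² + |∇ψ|²)`. -/
def Q00 (ψ : ℝ × E3 → ℝ) (p : ℝ × E3) : ℝ :=
  (1 / 2) * ((pt ψ p) ^ 2 + ∑ i, (px i ψ p) ^ 2)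

/-- Momentum density `Q₀ᵢ = ∂_tψ ∂_iψ`. -/
def Q0 (i : Fin 3) (ψ : ℝ × E3 → ℝ) (p : ℝ × E3) : ℝ := pt ψ p * px i ψ p


section AuxLemmas

lemma contDiff_pd (v : ℝ × E3) {ψ : ℝ × E3 → ℝ} (h : ContDiff ℝ (⊤ : ℕ∞) ψ) :
    ContDiff ℝ (⊤ : ℕ∞) (pd v ψ) := by
  unfold pd
  exact (h.fderiv_right (by simp)).clm_apply contDiff_const

lemma pd_mul {g h : ℝ × E3 → ℝ} {p : ℝ × E3} (v : ℝ × E3)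
    (hg : DifferentiableAt ℝ g p) (hh : DifferentiableAt ℝ h p) :
    pd v (fun q => g q * h q) p = pd v g p * h p + g p * pd v h p := by
  unfold pd
  rw [fderiv_fun_mul hg hh]
  simp only [ContinuousLinearMap.add_apply, ContinuousLinearMap.coe_smul', Pi.smul_apply,
    smul_eq_mul]
  ring

lemma pd_sq {g : ℝ × E3 → ℝ} {p : ℝ × E3} (v : ℝ × E3) (hg : DifferentiableAt ℝ g p) :
    pd v (fun q => g q ^ 2) p = 2 * g p * pd v g p := by
  simp only [pow_two]
  rw [pd_mul v hg hg]; ring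

lemma pd_const_mul {g : ℝ × E3 → ℝ} {p : ℝ × E3} (v : ℝ × E3) (c : ℝ)
    (hg : DifferentiableAt ℝ g p) :
    pd v (fun q => c * g q) p = c * pd v g p := by
  unfold pd
  rw [fderiv_const_mul hg]
  simp

lemma pd_add {g h : ℝ × E3 → ℝ} {p : ℝ × E3} (v : ℝ × E3)
    (hg : DifferentiableAt ℝ g p) (hh : DifferentiableAt ℝ h p) :
    pd v (fun q => g q + h q) p = pd v g p + pd v h p := by
  unfold pd
  rw [fderiv_fun_add hg hh]; simp

lemma pd_comm (v w : ℝ × E3) {ψ : ℝ × E3 → ℝ} (h : ContDiff ℝ (⊤ : ℕ∞) ψ) (p : ℝ × E3) :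
    pd v (pd w ψ) p = pd w (pd v ψ) p := by
  have hψd : Differentiable ℝ ψ := h.differentiable (by simp)
  have hfd : DifferentiableAt ℝ (fderiv ℝ ψ) p :=
    ((h.fderiv_right (m := 1) (by exact WithTop.coe_le_coe.2 le_top)).differentiable (by simp)) p
  have key : ∀ a b : ℝ × E3, pd a (pd b ψ) p = fderiv ℝ (fderiv ℝ ψ) p a b := by
    intro a b
    unfold pd
    rw [fderiv_clm_apply hfd (differentiableAt_const b)]
    simp
  rw [key, key]
  exact second_derivative_symmetric (fun y => (hψd y).hasFDerivAt) hfd.hasFDerivAt v w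

lemma hasFDerivAt_norm3 {x : E3} (hx : x ≠ 0) :
    HasFDerivAt (fun y : E3 => ‖y‖) (‖x‖⁻¹ • innerSL ℝ x) x := by
  have h1 : HasFDerivAt (fun y : E3 => ‖y‖ ^ 2) ((2 : ℕ) • innerSL ℝ x) x :=
    (hasStrictFDerivAt_norm_sq x).hasFDerivAt
  have hnx0 : ‖x‖ ≠ 0 := norm_ne_zero_iff.2 hx
  have hx2 : ‖x‖ ^ 2 ≠ 0 := pow_ne_zero 2 hnx0
  have h2 : HasDerivAt Real.sqrt (1 / (2 * Real.sqrt (‖x‖ ^ 2))) (‖x‖ ^ 2) :=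
    Real.hasDerivAt_sqrt hx2
  have h3 := h2.comp_hasFDerivAt x h1
  have heq : (fun y : E3 => ‖y‖) = Real.sqrt ∘ (fun y : E3 => ‖y‖ ^ 2) := by
    funext y; simp [Real.sqrt_sq (norm_nonneg y)]
  rw [heq]
  refine h3.congr_fderiv ?_
  rw [Real.sqrt_sq (norm_nonneg x)]
  ext v
  simp only [ContinuousLinearMap.coe_smul', Pi.smul_apply, smul_eq_mul, nsmul_eq_mul, Pi.mul_apply,
    Pi.natCast_apply, Nat.cast_ofNat, Pi.ofNat_apply]
  field_simp

lemma hasFDerivAt_uw {p : ℝ × E3} (hp : p.2 ≠ 0) :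
    HasFDerivAt uw
      ((ContinuousLinearMap.fst ℝ ℝ E3) -
        ((‖p.2‖⁻¹ • innerSL ℝ p.2).comp (ContinuousLinearMap.snd ℝ ℝ E3))) p := by
  have : HasFDerivAt (fun q : ℝ × E3 => q.1 - ‖q.2‖)
      ((ContinuousLinearMap.fst ℝ ℝ E3) -
        ((‖p.2‖⁻¹ • innerSL ℝ p.2).comp (ContinuousLinearMap.snd ℝ ℝ E3))) p :=
    hasFDerivAt_fst.sub ((hasFDerivAt_norm3 hp).comp p hasFDerivAt_snd)
  exact this

lemma pd_uw {p : ℝ × E3} (hp : p.2 ≠ 0) (v : ℝ × E3) :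
    pd v uw p = v.1 - (inner ℝ p.2 v.2 : ℝ) / ‖p.2‖ := by
  unfold pd
  rw [(hasFDerivAt_uw hp).fderiv]
  simp [div_eq_inv_mul]

lemma pt_def : pt = pd (1, 0) := rfl

lemma px_def (i : Fin 3) : px i = pd (0, EuclideanSpace.single i 1) := rfl

end AuxLemmas

/-- Pointwise divergence identity for the `(t-r)²`-weighted energy:
`∂_t(u² Q₀₀) - ∂^i(u² Q₀ᵢ) = u(|(∂_t+∂_r)φ|² + |∇̸φ|²) - u² ∂_tφ · □φ`. -/
theorem weighted_energy_divergence_identity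
    (φ f : ℝ × E3 → ℝ) (hφ : ContDiff ℝ (⊤ : ℕ∞) φ) (hbox : ∀ p, box φ p = f p) :
    ∀ p : ℝ × E3, p.2 ≠ 0 →
      pt (fun q => (uw q) ^ 2 * Q00 φ q) p -
          (∑ i, px i (fun q => (uw q) ^ 2 * Q0 i φ q) p) =
        uw p * ((pt φ p + pr φ p) ^ 2 + angGradSq φ p) -
          (uw p) ^ 2 * pt φ p * f p := by
  intro p hp
  have hr : ‖p.2‖ ≠ 0 := norm_ne_zero_iff.2 hp
  have hD : ∀ v : ℝ × E3, Differentiable ℝ (pd v φ) :=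
    fun v => (contDiff_pd v hφ).differentiable (by simp)
  have hud : DifferentiableAt ℝ uw p := (hasFDerivAt_uw hp).differentiableAt
  have hut : pd (1, (0 : E3)) uw p = 1 := by
    rw [pd_uw hp]; simp
  have hux : ∀ i : Fin 3, pd ((0 : ℝ), EuclideanSpace.single i 1) uw p = -(p.2 i / ‖p.2‖) := by
    intro i
    rw [pd_uw hp]
    simp [EuclideanSpace.inner_single_right]
  -- differentiability of the densities
  have d0 : ∀ w : ℝ × E3, DifferentiableAt ℝ (fun q => pd w φ q ^ 2) p :=
    fun w => (hD w p).pow 2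
  have d01 : DifferentiableAt ℝ
      (fun q => pd ((0:ℝ), EuclideanSpace.single 0 1) φ q ^ 2
        + pd ((0:ℝ), EuclideanSpace.single 1 1) φ q ^ 2) p := (d0 _).add (d0 _)
  have d012 : DifferentiableAt ℝ
      (fun q => pd ((0:ℝ), EuclideanSpace.single 0 1) φ q ^ 2
        + pd ((0:ℝ), EuclideanSpace.single 1 1) φ q ^ 2
        + pd ((0:ℝ), EuclideanSpace.single 2 1) φ q ^ 2) p := d01.add (d0 _)
  have eQ00 : Q00 φ = fun q => (1/2 : ℝ) * (pd (1, (0:E3)) φ q ^ 2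
      + (pd ((0:ℝ), EuclideanSpace.single 0 1) φ q ^ 2
        + pd ((0:ℝ), EuclideanSpace.single 1 1) φ q ^ 2
        + pd ((0:ℝ), EuclideanSpace.single 2 1) φ q ^ 2)) := by
    funext q
    simp [Q00, pt_def, px_def, Fin.sum_univ_three]
  have eQ0 : ∀ i, Q0 i φ = fun q => pd (1, (0:E3)) φ q * pd ((0:ℝ), EuclideanSpace.single i 1) φ q := by
    intro i; funext q; simp [Q0, pt_def, px_def]
  have hQ00dAt : DifferentiableAt ℝ (Q00 φ) p := by
    rw [eQ00]; exact ((d0 _).add d012).const_mul _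
  have hQ0dAt : ∀ i, DifferentiableAt ℝ (Q0 i φ) p := by
    intro i; rw [eQ0 i]; exact (hD _ p).mul (hD _ p)
  -- derivative of Q00
  have hdQ00 : ∀ v : ℝ × E3, pd v (Q00 φ) p =
      pd (1, (0:E3)) φ p * pd v (pd (1, (0:E3)) φ) p
      + (pd ((0:ℝ), EuclideanSpace.single 0 1) φ p * pd v (pd ((0:ℝ), EuclideanSpace.single 0 1) φ) p
        + pd ((0:ℝ), EuclideanSpace.single 1 1) φ p * pd v (pd ((0:ℝ), EuclideanSpace.single 1 1) φ) p
        + pd ((0:ℝ), EuclideanSpace.single 2 1) φ p * pd v (pd ((0:ℝ), EuclideanSpace.single 2 1) φ) p) := by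
    intro v
    rw [eQ00, pd_const_mul v _ ((d0 _).fun_add d012), pd_add v (d0 _) d012,
      pd_add v d01 (d0 _), pd_add v (d0 _) (d0 _), pd_sq v (hD _ p), pd_sq v (hD _ p),
      pd_sq v (hD _ p), pd_sq v (hD _ p)]
    ring
  -- derivative of Q0 i
  have hdQ0 : ∀ (v : ℝ × E3) (i : Fin 3), pd v (Q0 i φ) p =
      pd v (pd (1, (0:E3)) φ) p * pd ((0:ℝ), EuclideanSpace.single i 1) φ p
      + pd (1, (0:E3)) φ p * pd v (pd ((0:ℝ), EuclideanSpace.single i 1) φ) p := by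
    intro v i
    rw [eQ0 i, pd_mul v (hD _ p) (hD _ p)]
  -- product rule for the weighted densities
  have key : ∀ (v : ℝ × E3) (G : ℝ × E3 → ℝ), DifferentiableAt ℝ G p →
      pd v (fun q => uw q ^ 2 * G q) p
        = 2 * uw p * pd v uw p * G p + uw p ^ 2 * pd v G p := by
    intro v G hG
    rw [pd_mul v (hud.fun_pow 2) hG, pd_sq v hud]
  -- rewrite the goal
  simp only [pt_def, px_def, Fin.sum_univ_three]
  rw [key _ _ hQ00dAt, key _ _ (hQ0dAt 0), key _ _ (hQ0dAt 1), key _ _ (hQ0dAt 2),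
    hut, hux 0, hux 1, hux 2, hdQ00, hdQ0 _ 0, hdQ0 _ 1, hdQ0 _ 2,
    pd_comm ((0:ℝ), EuclideanSpace.single 0 1) (1, (0:E3)) hφ p,
    pd_comm ((0:ℝ), EuclideanSpace.single 1 1) (1, (0:E3)) hφ p,
    pd_comm ((0:ℝ), EuclideanSpace.single 2 1) (1, (0:E3)) hφ p]
  -- use the wave equation
  have hf : f p = -pd (1, (0:E3)) (pd (1, (0:E3)) φ) p
      + (pd ((0:ℝ), EuclideanSpace.single 0 1) (pd ((0:ℝ), EuclideanSpace.single 0 1) φ) p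
        + pd ((0:ℝ), EuclideanSpace.single 1 1) (pd ((0:ℝ), EuclideanSpace.single 1 1) φ) p
        + pd ((0:ℝ), EuclideanSpace.single 2 1) (pd ((0:ℝ), EuclideanSpace.single 2 1) φ) p) := by
    rw [← hbox p]
    simp [box, pt_def, px_def, Fin.sum_univ_three]
  rw [hf]
  simp only [Q00, Q0, pr, angGradSq, uw, pt_def, px_def, Fin.sum_univ_three]
  have hc : (p.2 0 / ‖p.2‖) ^ 2 + (p.2 1 / ‖p.2‖) ^ 2 + (p.2 2 / ‖p.2‖) ^ 2 = 1 := by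
    have hsum : p.2 0 ^ 2 + p.2 1 ^ 2 + p.2 2 ^ 2 = ‖p.2‖ ^ 2 := by
      rw [EuclideanSpace.norm_eq]
      rw [Real.sq_sqrt (by positivity)]
      simp [Fin.sum_univ_three, sq]
    field_simp
    linarith [hsum]
  set r := ‖p.2‖
  set A0 := pd ((0:ℝ), EuclideanSpace.single 0 1) φ p
  set A1 := pd ((0:ℝ), EuclideanSpace.single 1 1) φ p
  set A2 := pd ((0:ℝ), EuclideanSpace.single 2 1) φ p
  linear_combination (-( (p.1 - r) * (p.2 0 / r * A0 + p.2 1 / r * A1 + p.2 2 / r * A2) ^ 2)) * hc
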